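/- arXiv:2012.09915 — 2 statements merged into one kernel-verified Lean document; each statement's English description precedes it below -/
import Mathlib

section
/- Let gₙ : ℝ → ℝ be C¹ functions converging to a C¹ function g uniformly together with their first derivatives: sup_y |gₙ(y) − g(y)| → 0 and sup_y |gₙ'(y) − g'(y)| → 0. If g has a local maximum at m with g twice differentiable there and g''(m) < 0, then for every ε > 0 there is N such that for all n ≥ N the function gₙ has a critical point within ε of m. -/
/-!
Since `m` is an interior maximum, `G' m = 0`, and `G'' m < 0` makes `G'` change sign strictly
across `m`: `G' (m - d) > 0 > G' (m + d)` for every small `d > 0`. These two strict inequalities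
survive the (even just pointwise) convergence `gₙ' → G'`, so for large `n` the derivative `gₙ'`
changes sign on `[m - d, m + d]` and vanishes there by Darboux's theorem.
-/

open Filter Set Topology

lemma eventually_pos_left_neg_right_of_hasDerivAt_neg {f : ℝ → ℝ} {m L : ℝ} (hfm : f m = 0)
    (hf : HasDerivAt f L m) (hL : L < 0) :
    ∀ᶠ d in 𝓝[>] 0, 0 < f (m - d) ∧ f (m + d) < 0 := by
  have hsign := eventually_nhdsWithin_sign_eq_of_deriv_neg (hf.deriv ▸ hL) hfm
  have hleft : Tendsto (fun d => m - d) (𝓝[>] 0) (𝓝 m) :=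
    tendsto_nhdsWithin_of_tendsto_nhds (by simpa using (tendsto_id (x := 𝓝 (0 : ℝ))).const_sub m)
  have hright : Tendsto (fun d => m + d) (𝓝[>] 0) (𝓝 m) :=
    tendsto_nhdsWithin_of_tendsto_nhds (by simpa using (tendsto_id (x := 𝓝 (0 : ℝ))).const_add m)
  filter_upwards [self_mem_nhdsWithin, hleft.eventually hsign, hright.eventually hsign]
    with d (hd : 0 < d) hl hr
  rw [sub_sub_cancel, _root_.sign_pos hd, sign_eq_one_iff] at hl
  rw [sub_add_cancel_left, _root_.sign_neg (neg_neg_of_pos hd), sign_eq_neg_one_iff] at hr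
  exact ⟨hl, hr⟩

lemma tendsto_apply_of_forall_abs_sub_lt {u : ℕ → ℝ → ℝ} {v : ℝ → ℝ}
    (h : ∀ ε > (0 : ℝ), ∃ N, ∀ n ≥ N, ∀ y, |u n y - v y| < ε) (y : ℝ) :
    Tendsto (fun n => u n y) atTop (𝓝 (v y)) :=
  Metric.tendsto_atTop.2 fun ε hε => (h ε hε).imp fun _ hN n hn => hN n hn y

theorem critical_points_converge_general
    (g : ℕ → ℝ → ℝ) (G : ℝ → ℝ)
    (hg : ∀ n, ContDiff ℝ 1 (g n))
    (hconv' : ∀ ε > (0:ℝ), ∃ N, ∀ n ≥ N, ∀ y : ℝ, |deriv (g n) y - deriv G y| < ε)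
    (m L : ℝ) (hmax : IsLocalMax G m)
    (hsecond : HasDerivAt (deriv G) L m) (hL : L < 0) :
    ∀ ε > (0:ℝ), ∃ N, ∀ n ≥ N, ∃ y : ℝ, |y - m| < ε ∧ deriv (g n) y = 0 := by
  intro ε hε
  obtain ⟨d, ⟨hGleft, hGright⟩, hd0, hdε⟩ :=
    ((eventually_pos_left_neg_right_of_hasDerivAt_neg hmax.deriv_eq_zero hsecond hL).and
      (Ioo_mem_nhdsGT hε)).exists
  have hleft := (tendsto_apply_of_forall_abs_sub_lt hconv' (m - d)).eventually (lt_mem_nhds hGleft)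
  have hright :=
    (tendsto_apply_of_forall_abs_sub_lt hconv' (m + d)).eventually (gt_mem_nhds hGright)
  obtain ⟨N, hN⟩ := eventually_atTop.1 (hleft.and hright)
  refine ⟨N, fun n hn => ?_⟩
  have hdiff := (hg n).differentiable one_ne_zero
  obtain ⟨y, ⟨hy₁, hy₂⟩, hy⟩ := exists_hasDerivWithinAt_eq_of_lt_of_gt (by linarith)
    (fun x _ => (hdiff x).hasDerivAt.hasDerivWithinAt) (hN n hn).1 (hN n hn).2
  exact ⟨y, abs_sub_lt_iff.2 ⟨by linarith, by linarith⟩, hy⟩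

theorem critical_points_converge
    (g : ℕ → ℝ → ℝ) (G : ℝ → ℝ)
    (hg : ∀ n, ContDiff ℝ 1 (g n)) (hG : ContDiff ℝ 1 G)
    (hconv : ∀ ε > (0:ℝ), ∃ N, ∀ n ≥ N, ∀ y : ℝ, |g n y - G y| < ε)
    (hconv' : ∀ ε > (0:ℝ), ∃ N, ∀ n ≥ N, ∀ y : ℝ, |deriv (g n) y - deriv G y| < ε)
    (m L : ℝ) (hmax : IsLocalMax G m)
    (hsecond : HasDerivAt (deriv G) L m) (hL : L < 0) :
    ∀ ε > (0:ℝ), ∃ N, ∀ n ≥ N, ∃ y : ℝ, |y - m| < ε ∧ deriv (g n) y = 0 :=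
  critical_points_converge_general g G hg hconv' m L hmax hsecond hL
end

section
/- Let φ ↦ f̂(φ) = C Σⱼ wⱼ exp[−κ(1 − cos(φ − Φⱼ))] with wⱼ > 0, C > 0, κ > 0 (von Mises-type conditional density estimate). Then the circular mean shift function m̃(φ) = sin(ω̃(φ) − φ), where ω̃(φ) = atan2(Σⱼ wⱼ e^{−κ(1−cos(φ−Φⱼ))} sin Φⱼ, Σⱼ wⱼ e^{−κ(1−cos(φ−Φⱼ))} cos Φⱼ), satisfies: m̃(φ) = 0 whenever f̂'(φ) = 0, provided the weighted sine/cosine sums at φ are not both zero. -/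
/-!
Differentiating under the finite sum, `f̂'(φ) = -Cκ Σⱼ aⱼ sin (φ - Φⱼ)` with
`aⱼ = wⱼ e^{-κ(1 - cos (φ - Φⱼ))}`, and expanding `sin (φ - Φⱼ)` turns this into
`-Cκ (sin φ · C_δ(φ) - cos φ · S_δ(φ))`. On the other hand, for `z = C_δ(φ) + i S_δ(φ)`,
`‖z‖ sin (arg z - φ) = S_δ(φ) cos φ - C_δ(φ) sin φ`. So a critical point of `f̂` makes the
mean shift vanish as soon as `z ≠ 0`.
-/

open Real

theorem hasDerivAt_exp_vonMises (κ μ x : ℝ) :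
    HasDerivAt (fun x => exp (-(κ * (1 - cos (x - μ)))))
      (exp (-(κ * (1 - cos (x - μ)))) * -(κ * sin (x - μ))) x := by
  have hinner := ((((hasDerivAt_id' x).sub_const μ).cos.const_sub 1).const_mul κ).fun_neg
  exact hinner.exp.congr_deriv (by ring)

theorem Finset.sum_mul_sin_sub {ι : Type*} (s : Finset ι) (a Φ : ι → ℝ) (φ : ℝ) :
    ∑ i ∈ s, a i * sin (φ - Φ i) =
      sin φ * ∑ i ∈ s, a i * cos (Φ i) - cos φ * ∑ i ∈ s, a i * sin (Φ i) := by
  simp only [Finset.mul_sum, ← Finset.sum_sub_distrib, sin_sub]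
  exact Finset.sum_congr rfl fun _ _ => by ring

theorem hasDerivAt_sum_exp_vonMises {ι : Type*} (s : Finset ι) (w Φ : ι → ℝ) (κ φ : ℝ) :
    HasDerivAt (fun x => ∑ i ∈ s, w i * exp (-(κ * (1 - cos (x - Φ i)))))
      (-κ * (sin φ * ∑ i ∈ s, w i * exp (-(κ * (1 - cos (φ - Φ i)))) * cos (Φ i) -
        cos φ * ∑ i ∈ s, w i * exp (-(κ * (1 - cos (φ - Φ i)))) * sin (Φ i))) φ := by
  rw [← Finset.sum_mul_sin_sub, Finset.mul_sum]
  refine (HasDerivAt.fun_sum fun i _ =>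
    (hasDerivAt_exp_vonMises κ (Φ i) φ).const_mul (w i)).congr_deriv ?_
  exact Finset.sum_congr rfl fun _ _ => by ring

theorem Complex.norm_mul_sin_arg_sub (z : ℂ) (φ : ℝ) :
    ‖z‖ * Real.sin (z.arg - φ) = z.im * Real.cos φ - z.re * Real.sin φ := by
  rcases eq_or_ne z 0 with rfl | hz
  · simp
  rw [Real.sin_sub, Complex.sin_arg, Complex.cos_arg hz]
  field_simp

theorem circular_mean_shift_zero_at_critical_general
    (n : ℕ) (C κ : ℝ) (hC : 0 < C) (hκ : 0 < κ)
    (w Φ : Fin n → ℝ)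
    (f : ℝ → ℝ)
    (hf : f = fun φ => C * ∑ j, w j * exp (-(κ * (1 - cos (φ - Φ j)))))
    (S Cs : ℝ → ℝ)
    (hS : S = fun φ => ∑ j, w j * exp (-(κ * (1 - cos (φ - Φ j)))) * sin (Φ j))
    (hCs : Cs = fun φ => ∑ j, w j * exp (-(κ * (1 - cos (φ - Φ j)))) * cos (Φ j))
    (φ : ℝ) (hne : ¬(S φ = 0 ∧ Cs φ = 0)) (hcrit : deriv f φ = 0) :
    sin (Complex.arg (Complex.I * (S φ) + (Cs φ)) - φ) = 0 := by
  have hf' : HasDerivAt f (C * (-κ * (sin φ * Cs φ - cos φ * S φ))) φ :=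
    hf ▸ hS ▸ hCs ▸ (hasDerivAt_sum_exp_vonMises _ w Φ κ φ).const_mul C
  have hbalance : S φ * cos φ - Cs φ * sin φ = 0 := by
    rw [hf'.deriv] at hcrit
    have hX : sin φ * Cs φ - cos φ * S φ = 0 := by simpa [hC.ne', hκ.ne'] using hcrit
    linear_combination -hX
  set z : ℂ := Complex.I * (S φ) + (Cs φ)
  have hz : z ≠ 0 := fun h =>
    hne ⟨by simpa [z] using congrArg Complex.im h, by simpa [z] using congrArg Complex.re h⟩
  have hnorm : ‖z‖ * sin (z.arg - φ) = S φ * cos φ - Cs φ * sin φ := by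
    simpa [z] using Complex.norm_mul_sin_arg_sub z φ
  rw [hbalance] at hnorm
  exact (mul_eq_zero.mp hnorm).resolve_left (norm_ne_zero_iff.mpr hz)

theorem circular_mean_shift_zero_at_critical
    (n : ℕ) (C κ : ℝ) (hC : 0 < C) (hκ : 0 < κ)
    (w Φ : Fin n → ℝ) (hw : ∀ j, 0 < w j)
    (f : ℝ → ℝ)
    (hf : f = fun φ => C * ∑ j, w j * exp (-(κ * (1 - cos (φ - Φ j)))))
    (S Cs : ℝ → ℝ)
    (hS : S = fun φ => ∑ j, w j * exp (-(κ * (1 - cos (φ - Φ j)))) * sin (Φ j))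
    (hCs : Cs = fun φ => ∑ j, w j * exp (-(κ * (1 - cos (φ - Φ j)))) * cos (Φ j))
    (φ : ℝ) (hne : ¬(S φ = 0 ∧ Cs φ = 0)) (hcrit : deriv f φ = 0) :
    sin (Complex.arg (Complex.I * (S φ) + (Cs φ)) - φ) = 0 :=
  circular_mean_shift_zero_at_critical_general n C κ hC hκ w Φ f hf S Cs hS hCs φ hne hcrit
end
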